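/- Let (X,Y) be a 3-separation of a 3-connected matroid M. If X ∩ cl(Y) ≠ ∅ and X ∩ cl*(Y) ≠ ∅, then |X ∩ cl(Y)| = 1 and |X ∩ cl*(Y)| = 1. -/

import Mathlib

open Set Matroid

namespace PaperFormal

variable {α : Type*} {β : Type*}

/-- The (ℤ-valued) rank of a set in a matroid: the supremum of cardinalities of
independent subsets. -/
noncomputable def rk (M : Matroid α) (X : Set α) : ℤ :=
  (sSup {n : ℕ | ∃ I, I ⊆ X ∧ M.Indep I ∧ I.ncard = n} : ℕ)

/-- Local connectivity `⊓(X,Y) = r(X) + r(Y) − r(X ∪ Y)`. -/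
noncomputable def lconn (M : Matroid α) (X Y : Set α) : ℤ :=
  rk M X + rk M Y - rk M (X ∪ Y)

/-- The connectivity function `λ(X) = r(X) + r(E − X) − r(M)`. -/
noncomputable def lam (M : Matroid α) (X : Set α) : ℤ :=
  rk M X + rk M (M.E \ X) - rk M M.E

/-- A circuit: a minimal dependent set. -/
def IsCircuitP (M : Matroid α) (C : Set α) : Prop :=
  M.Dep C ∧ ∀ D ⊂ C, M.Indep D

/-- A triangle: a 3-element circuit. -/
def IsTriangleP (M : Matroid α) (T : Set α) : Prop :=
  IsCircuitP M T ∧ T.ncard = 3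

/-- A triad: a 3-element cocircuit. -/
def IsTriadP (M : Matroid α) (T : Set α) : Prop :=
  IsCircuitP M✶ T ∧ T.ncard = 3

/-- A `k`-separation: a partition `(X, E − X)` with `λ(X) < k` and both sides of
size at least `k`. -/
def IsKSepP (M : Matroid α) (k : ℕ) (X : Set α) : Prop :=
  X ⊆ M.E ∧ lam M X ≤ (k : ℤ) - 1 ∧ (k : ℤ) ≤ X.ncard ∧ (k : ℤ) ≤ (M.E \ X).ncard

/-- `M` is 3-connected if it has no `k`-separations for `k < 3`. -/
def ThreeConnectedP (M : Matroid α) : Prop :=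
  ∀ k : ℕ, k < 3 → ∀ X : Set α, ¬ IsKSepP M k X

/-- Deletion of a set of elements. -/
def PDelete (M : Matroid α) (D : Set α) : Matroid α := M ↾ (M.E \ D)

/-- Contraction of a set of elements. -/
def PContract (M : Matroid α) (C : Set α) : Matroid α := (PDelete M✶ C)✶

/-- `N` is a minor of `M`. -/
def IsMinorP (N M : Matroid α) : Prop :=
  ∃ C D, Disjoint C D ∧ C ⊆ M.E ∧ D ⊆ M.E ∧ N = PDelete (PContract M C) D

/-- `M` is (isomorphic to) the uniform matroid `U_{a,b}`. -/
def IsUnifP (a b : ℕ) (M : Matroid α) : Prop :=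
  M.E.Finite ∧ M.E.ncard = b ∧ ∀ I ⊆ M.E, (M.Indep I ↔ I.ncard ≤ a)

/-- `M` has a minor isomorphic to `U_{a,b}`. -/
def HasUnifMinorP (M : Matroid α) (a b : ℕ) : Prop :=
  ∃ N, IsMinorP N M ∧ IsUnifP a b N

/-- `M` has a minor isomorphic to `U_{2,5}` or `U_{3,5}`. -/
def HasU25U35MinorP (M : Matroid α) : Prop :=
  HasUnifMinorP M 2 5 ∨ HasUnifMinorP M 3 5

/-- `M` is fragile with respect to the (isomorphism-closed) property `P` of matroids:
`M` has a minor satisfying `P`, and no element is flexible. -/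
def FragileFor (M : Matroid α) (P : Matroid α → Prop) : Prop :=
  (∃ N, IsMinorP N M ∧ P N) ∧
    ∀ e ∈ M.E,
      ¬((∃ N, IsMinorP N (PDelete M {e}) ∧ P N) ∧ (∃ N, IsMinorP N (PContract M {e}) ∧ P N))



/-! ### Auxiliary rank lemmas -/

section RankLemmas

variable {M : Matroid α} {X Y I J S : Set α} {e x y z : α}

lemma rk_eq_ncard_of_basis' [M.Finite] (hI : M.IsBasis' I X) : rk M X = I.ncard := by
  have hub : ∀ n ∈ {n : ℕ | ∃ J, J ⊆ X ∧ M.Indep J ∧ J.ncard = n}, n ≤ I.ncard := by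
    rintro n ⟨J, hJX, hJ, rfl⟩
    obtain ⟨I', hI', hJI'⟩ := hJ.subset_isBasis'_of_subset hJX
    have h1 : I'.ncard = I.ncard :=
      (isBase_restrict_iff'.2 hI').ncard_eq_ncard_of_isBase (isBase_restrict_iff'.2 hI)
    exact le_trans (Set.ncard_le_ncard hJI' (M.set_finite I' hI'.indep.subset_ground)) h1.le
  have hmem : I.ncard ∈ {n : ℕ | ∃ J, J ⊆ X ∧ M.Indep J ∧ J.ncard = n} :=
    ⟨I, hI.subset, hI.indep, rfl⟩
  have hs : sSup {n : ℕ | ∃ J, J ⊆ X ∧ M.Indep J ∧ J.ncard = n} = I.ncard :=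
    le_antisymm (csSup_le ⟨_, hmem⟩ hub) (le_csSup ⟨_, hub⟩ hmem)
  rw [rk, hs]

lemma ncard_le_rk [M.Finite] (hJ : M.Indep J) (hJX : J ⊆ X) : (J.ncard : ℤ) ≤ rk M X := by
  obtain ⟨I, hI, hJI⟩ := hJ.subset_isBasis'_of_subset hJX
  rw [rk_eq_ncard_of_basis' hI]
  exact_mod_cast Set.ncard_le_ncard hJI (M.set_finite I hI.indep.subset_ground)

lemma rk_mono [M.Finite] (h : X ⊆ Y) : rk M X ≤ rk M Y := by
  obtain ⟨I, hI⟩ := M.exists_isBasis' X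
  rw [rk_eq_ncard_of_basis' hI]
  exact ncard_le_rk hI.indep (hI.subset.trans h)

lemma rk_closure_eq [M.Finite] : rk M (M.closure X) = rk M X := by
  obtain ⟨I, hI⟩ := M.exists_isBasis' X
  rw [rk_eq_ncard_of_basis' hI, rk_eq_ncard_of_basis' hI.isBasis_closure_right.isBasis']

lemma rk_insert_of_mem_closure [M.Finite] (he : e ∈ M.closure X) (hX : X ⊆ M.E) :
    rk M (insert e X) = rk M X := by
  refine le_antisymm ?_ (rk_mono (subset_insert _ _))
  have h1 : insert e X ⊆ M.closure X := insert_subset he (M.subset_closure X hX)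
  have h2 := rk_mono (M := M) h1
  rwa [rk_closure_eq] at h2

lemma rk_le_ncard [M.Finite] (hX : X.Finite) : rk M X ≤ (X.ncard : ℤ) := by
  obtain ⟨I, hI⟩ := M.exists_isBasis' X
  rw [rk_eq_ncard_of_basis' hI]
  exact_mod_cast Set.ncard_le_ncard hI.subset hX

lemma rk_submod [M.Finite] (X Y : Set α) :
    rk M (X ∪ Y) + rk M (X ∩ Y) ≤ rk M X + rk M Y := by
  obtain ⟨I, hI⟩ := M.exists_isBasis' (X ∩ Y)
  obtain ⟨J, hJ, hIJ⟩ := hI.indep.subset_isBasis'_of_subset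
    (hI.subset.trans (inter_subset_left.trans subset_union_left))
  have hJfin : J.Finite := M.set_finite J hJ.indep.subset_ground
  have hXY : rk M (X ∪ Y) = J.ncard := rk_eq_ncard_of_basis' hJ
  have hIXY : rk M (X ∩ Y) ≤ ((J ∩ (X ∩ Y)).ncard : ℤ) := by
    rw [rk_eq_ncard_of_basis' hI]
    exact_mod_cast Set.ncard_le_ncard (subset_inter hIJ hI.subset) (hJfin.subset inter_subset_left)
  have hX' : ((J ∩ X).ncard : ℤ) ≤ rk M X := ncard_le_rk (hJ.indep.inter_right X) inter_subset_right
  have hY' : ((J ∩ Y).ncard : ℤ) ≤ rk M Y := ncard_le_rk (hJ.indep.inter_right Y) inter_subset_right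
  have hunion : (J ∩ X) ∪ (J ∩ Y) = J := by
    rw [← Set.inter_union_distrib_left]
    exact inter_eq_self_of_subset_left hJ.subset
  have hinter : (J ∩ X) ∩ (J ∩ Y) = J ∩ (X ∩ Y) := by
    ext a; simp only [mem_inter_iff]; tauto
  have hcard := Set.ncard_union_add_ncard_inter (J ∩ X) (J ∩ Y)
    (hJfin.subset inter_subset_left) (hJfin.subset inter_subset_left)
  rw [hunion, hinter] at hcard
  have : (J.ncard : ℤ) + (J ∩ (X ∩ Y)).ncard = (J ∩ X).ncard + (J ∩ Y).ncard := by
    exact_mod_cast congrArg Nat.cast hcard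
  linarith

lemma rk_empty [M.Finite] : rk M (∅ : Set α) = 0 := by
  obtain ⟨I, hI⟩ := M.exists_isBasis' (∅ : Set α)
  rw [rk_eq_ncard_of_basis' hI, subset_empty_iff.1 hI.subset]
  simp

lemma rk_dual [M.Finite] (hS : S ⊆ M.E) :
    rk M✶ S = (S.ncard : ℤ) + rk M (M.E \ S) - rk M M.E := by
  obtain ⟨J, hJ'⟩ := M.exists_isBasis' (M.E \ S)
  have hJ : M.IsBasis J (M.E \ S) := hJ'.isBasis diff_subset
  obtain ⟨B, hB, hJB⟩ := hJ.exists_isBase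
  have hBE : B ⊆ M.E := hB.subset_ground
  -- the dual basis
  have hKindep : M✶.Indep (S \ B) :=
    (dual_indep_iff_exists (diff_subset.trans hS)).2 ⟨B, hB, disjoint_sdiff_left⟩
  have hmax : ∀ e ∈ S ∩ B, ¬ M✶.Indep (insert e (S \ B)) := by
    rintro e ⟨heS, heB⟩ hcon
    obtain ⟨B', hB', hdisj⟩ := (dual_indep_iff_exists
      ((insert_subset (hS heS) (diff_subset.trans hS)))).1 hcon
    have hJBe : J ⊆ B \ {e} := by
      rintro j hj
      rw [hJB] at hj
      exact ⟨hj.1, fun hje => hj.2.2 (by rw [← mem_singleton_iff.1 hje] at heS; exact heS)⟩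
    have hsubB' : B' ⊆ M.closure (B \ {e}) := by
      intro b hb
      have hbE : b ∈ M.E := hB'.subset_ground hb
      by_cases hbS : b ∈ S
      · have hbB : b ∈ B := by
          by_contra hbB
          exact (hdisj.ne_of_mem (mem_insert_iff.2 (Or.inr ⟨hbS, hbB⟩)) hb) rfl
        have hbe : b ≠ e := by rintro rfl; exact (hdisj.ne_of_mem (mem_insert _ _) hb) rfl
        exact M.subset_closure (B \ {e}) (diff_subset.trans hBE) ⟨hbB, hbe⟩
      · exact (M.closure_subset_closure hJBe) (hJ.subset_closure ⟨hbE, hbS⟩)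
    have hEsub : M.E ⊆ M.closure (B \ {e}) := by
      rw [← hB'.closure_eq]
      exact (M.closure_subset_closure hsubB').trans (by rw [M.closure_closure])
    exact hB.indep.notMem_closure_diff_of_mem heB (hEsub (hBE heB))
  have hKbasis : M✶.IsBasis' (S \ B) S := by
    refine ⟨⟨hKindep, diff_subset⟩, ?_⟩
    rintro K ⟨hKi, hKS⟩ hsub
    intro a haK
    by_contra haSB
    have haB : a ∈ B := by
      by_contra h
      exact haSB ⟨hKS haK, h⟩
    exact hmax a ⟨hKS haK, haB⟩ (hKi.subset (insert_subset haK hsub))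
  -- cardinalities
  have hSfin : S.Finite := M.set_finite S hS
  have hBfin : B.Finite := M.set_finite B hBE
  have h1 : (S ∩ B).ncard + (S \ B).ncard = S.ncard :=
    Set.ncard_inter_add_ncard_diff_eq_ncard S B hSfin
  have h2 : (B ∩ S).ncard + (B \ S).ncard = B.ncard :=
    Set.ncard_inter_add_ncard_diff_eq_ncard B S hBfin
  have hJeq : J = B \ S := by
    rw [hJB]; ext b
    exact ⟨fun h => ⟨h.1, h.2.2⟩, fun h => ⟨h.1, hBE h.1, h.2⟩⟩
  have hrkE : rk M M.E = (B.ncard : ℤ) := by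
    rw [rk_eq_ncard_of_basis' (isBasis_ground_iff.2 hB).isBasis']
  have hrkES : rk M (M.E \ S) = (J.ncard : ℤ) := by rw [rk_eq_ncard_of_basis' hJ']
  have hrkdual : rk M✶ S = ((S \ B).ncard : ℤ) := rk_eq_ncard_of_basis' hKbasis
  have hic : (S ∩ B).ncard = (B ∩ S).ncard := by rw [inter_comm]
  rw [hrkdual, hrkE, hrkES, hJeq]
  have h1' : ((S ∩ B).ncard : ℤ) + (S \ B).ncard = S.ncard := by exact_mod_cast h1
  have h2' : ((B ∩ S).ncard : ℤ) + (B \ S).ncard = B.ncard := by exact_mod_cast h2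
  rw [hic] at h1'
  linarith

lemma lam_dual [M.Finite] (hS : S ⊆ M.E) : lam M✶ S = lam M S := by
  have hEfin : M.E.Finite := M.ground_finite
  have h1 := rk_dual (M := M) hS
  have h2 := rk_dual (M := M) (diff_subset (s := M.E) (t := S))
  have h3 := rk_dual (M := M) (subset_refl M.E)
  rw [diff_diff_cancel_left hS] at h2
  rw [diff_self] at h3
  have hc : ((M.E ∩ S).ncard : ℤ) + ((M.E \ S).ncard : ℤ) = (M.E.ncard : ℤ) := by
    exact_mod_cast Set.ncard_inter_add_ncard_diff_eq_ncard M.E S hEfin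
  rw [inter_eq_self_of_subset_right hS] at hc
  simp only [lam, dual_ground]
  rw [h1, h2, h3, rk_empty]
  linarith

lemma isKSepP_dual_iff [M.Finite] {k : ℕ} : IsKSepP M✶ k S ↔ IsKSepP M k S := by
  constructor
  · rintro ⟨h1, h2, h3, h4⟩
    rw [dual_ground] at h1
    rw [lam_dual h1, dual_ground] at *
    exact ⟨h1, h2, h3, h4⟩
  · rintro ⟨h1, h2, h3, h4⟩
    refine ⟨by rwa [dual_ground], ?_, h3, ?_⟩
    · rwa [lam_dual h1]
    · rwa [dual_ground]

lemma threeConnectedP_dual [M.Finite] (hM : ThreeConnectedP M) : ThreeConnectedP M✶ :=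
  fun k hk X hX => hM k hk X (isKSepP_dual_iff.1 hX)

section Key

variable [M.Finite] (hdisj : Disjoint X Y) (hU : X ∪ Y = M.E)

include hdisj hU

lemma compl_right : M.E \ X = Y := by
  rw [← hU]; exact union_diff_cancel_left hdisj.inter_eq.subset

lemma compl_left : M.E \ Y = X := by
  rw [← hU, union_comm]
  exact union_diff_cancel_left (by rw [inter_comm]; exact hdisj.inter_eq.subset)

lemma rk_diff_singleton (hzX : z ∈ X) (hz : z ∈ M✶.closure Y) :
    rk M (X \ {z}) = rk M X - 1 := by
  have hXE : X ⊆ M.E := by rw [← hU]; exact subset_union_left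
  have hYE : Y ⊆ M.E := by rw [← hU]; exact subset_union_right
  have hzY : z ∉ Y := disjoint_left.1 hdisj hzX
  have h1 : rk M✶ (insert z Y) = rk M✶ Y :=
    rk_insert_of_mem_closure hz (by rw [dual_ground]; exact hYE)
  have hiYE : insert z Y ⊆ M.E := insert_subset (hXE hzX) hYE
  rw [rk_dual hiYE, rk_dual hYE, compl_left hdisj hU] at h1
  have hce : M.E \ insert z Y = X \ {z} := by
    rw [← hU]; ext a
    simp only [mem_diff, mem_union, mem_insert_iff, mem_singleton_iff]
    constructor
    · rintro ⟨h1 | h1, h2⟩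
      · exact ⟨h1, fun h => h2 (Or.inl h)⟩
      · exact absurd (Or.inr h1) h2
    · rintro ⟨h1, h2⟩
      exact ⟨Or.inl h1, fun h => h.elim h2 (disjoint_left.1 hdisj h1)⟩
  rw [hce] at h1
  have hYfin : Y.Finite := M.set_finite Y hYE
  have hcard : ((insert z Y).ncard : ℤ) = (Y.ncard : ℤ) + 1 := by
    exact_mod_cast Set.ncard_insert_of_notMem hzY hYfin
  linarith

lemma keyGC (hM : ThreeConnectedP M) (hsep : IsKSepP M 3 X)
    (hz1 : z ∈ X) (hz2 : z ∈ M.closure Y) (hz3 : z ∈ M✶.closure Y) : False := by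
  have hXE : X ⊆ M.E := hsep.1
  have hYE : Y ⊆ M.E := by rw [← hU]; exact subset_union_right
  have hEfin : M.E.Finite := M.ground_finite
  have hzY : z ∉ Y := disjoint_left.1 hdisj hz1
  have h1 : rk M (X \ {z}) = rk M X - 1 := rk_diff_singleton hdisj hU hz1 hz3
  have h2 : rk M (insert z Y) = rk M Y := rk_insert_of_mem_closure hz2 hYE
  have hce : M.E \ (X \ {z}) = insert z Y := by
    rw [← hU]; ext a
    simp only [mem_diff, mem_union, mem_insert_iff, mem_singleton_iff, not_and, not_not]
    constructor
    · rintro ⟨h3 | h3, h4⟩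
      · exact Or.inl (h4 h3)
      · exact Or.inr h3
    · rintro (rfl | h3)
      · exact ⟨Or.inl hz1, fun _ => rfl⟩
      · exact ⟨Or.inr h3, fun hX' => absurd h3 (disjoint_left.1 hdisj hX')⟩
  have hlamX : lam M X ≤ 2 := by
    have := hsep.2.1; norm_num at this; exact this
  have hcomplX : M.E \ X = Y := compl_right hdisj hU
  apply hM 2 (by norm_num) (X \ {z})
  refine ⟨diff_subset.trans hXE, ?_, ?_, ?_⟩
  · simp only [lam] at hlamX ⊢
    rw [hcomplX] at hlamX
    rw [hce, h1, h2]
    push_cast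
    linarith
  · have h3 : (3 : ℤ) ≤ X.ncard := hsep.2.2.1
    have h4 : X.ncard ≤ (X \ {z}).ncard + 1 := by
      have : X ⊆ insert z (X \ {z}) := by
        intro a ha; by_cases haz : a = z
        · exact mem_insert_iff.2 (Or.inl haz)
        · exact mem_insert_iff.2 (Or.inr ⟨ha, haz⟩)
      exact le_trans (Set.ncard_le_ncard this (((hEfin.subset hXE).diff).insert z))
        (Set.ncard_insert_le z _)
    push_cast
    have h4' : (X.ncard : ℤ) ≤ ((X \ {z}).ncard : ℤ) + 1 := by exact_mod_cast h4
    linarith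
  · rw [hce]
    have h3 : (3 : ℤ) ≤ Y.ncard := by
      have := hsep.2.2.2; rwa [hcomplX] at this
    have h4 : (Y.ncard : ℤ) ≤ ((insert z Y).ncard : ℤ) := by
      exact_mod_cast Set.ncard_le_ncard (subset_insert _ _) ((hEfin.subset hYE).insert z)
    push_cast
    linarith

lemma key (hM : ThreeConnectedP M) (hsep : IsKSepP M 3 X)
    (hx : x ∈ X ∩ M.closure Y) (hy : y ∈ X ∩ M.closure Y) (hxy : x ≠ y)
    (hz : z ∈ X ∩ M✶.closure Y) : False := by
  have hXE : X ⊆ M.E := hsep.1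
  have hYE : Y ⊆ M.E := by rw [← hU]; exact subset_union_right
  have hEfin : M.E.Finite := M.ground_finite
  have hcomplX : M.E \ X = Y := compl_right hdisj hU
  by_cases hzx : z = x
  · exact keyGC hdisj hU hM hsep hz.1 (hzx ▸ hx.2) hz.2
  by_cases hzy : z = y
  · exact keyGC hdisj hU hM hsep hz.1 (hzy ▸ hy.2) hz.2
  -- main case
  have h1 : rk M (X \ {z}) = rk M X - 1 := rk_diff_singleton hdisj hU hz.1 hz.2
  have hyYE : insert y Y ⊆ M.E := insert_subset (hXE hy.1) hYE
  have hT : rk M (insert x (insert y Y)) = rk M Y := by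
    rw [rk_insert_of_mem_closure ((M.closure_subset_closure (subset_insert y Y)) hx.2) hyYE,
      rk_insert_of_mem_closure hy.2 hYE]
  set A := X \ {z} with hA
  set T := insert x (insert y Y) with hTdef
  have hUeq : A ∪ T = M.E \ {z} := by
    rw [← hU]; ext a
    simp only [hA, hTdef, mem_union, mem_diff, mem_insert_iff, mem_singleton_iff]
    constructor
    · rintro (⟨h3, h4⟩ | h3 | h3 | h3)
      · exact ⟨Or.inl h3, h4⟩
      · exact ⟨Or.inl (h3 ▸ hx.1), h3 ▸ (fun h => hzx h.symm)⟩
      · exact ⟨Or.inl (h3 ▸ hy.1), h3 ▸ (fun h => hzy h.symm)⟩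
      · exact ⟨Or.inr h3, fun h => (disjoint_left.1 hdisj hz.1) (h ▸ h3)⟩
    · rintro ⟨h3 | h3, h4⟩
      · exact Or.inl ⟨h3, h4⟩
      · exact Or.inr (Or.inr (Or.inr h3))
  have hpairsub : {x, y} ⊆ A ∩ T := by
    rintro a (rfl | rfl)
    · exact ⟨⟨hx.1, fun h => hzx h.symm⟩, mem_insert _ _⟩
    · exact ⟨⟨hy.1, fun h => hzy h.symm⟩, mem_insert_iff.2 (Or.inr (mem_insert _ _))⟩
  have hsub := rk_submod (M := M) A T
  have hpair : rk M {x, y} ≤ rk M (A ∩ T) := rk_mono hpairsub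
  -- z is not a coloop
  have hcoloop : rk M (M.E \ {z}) = rk M M.E := by
    refine le_antisymm (rk_mono diff_subset) ?_
    by_contra hcon
    push_neg at hcon
    apply hM 1 (by norm_num) {z}
    have hrkz : rk M {z} ≤ 1 := by
      have := rk_le_ncard (M := M) (finite_singleton z)
      rwa [Set.ncard_singleton] at this
    refine ⟨singleton_subset_iff.2 (hXE hz.1), ?_, ?_, ?_⟩
    · simp only [lam]
      push_cast
      linarith
    · simp
    · have h3 : (3 : ℤ) ≤ Y.ncard := by
        have := hsep.2.2.2; rwa [hcomplX] at this
      have h4 : (Y.ncard : ℤ) ≤ ((M.E \ {z}).ncard : ℤ) := by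
        have hsub2 : Y ⊆ M.E \ {z} := fun a ha =>
          ⟨hYE ha, fun h => (disjoint_left.1 hdisj hz.1) (mem_singleton_iff.1 h ▸ ha)⟩
        exact_mod_cast Set.ncard_le_ncard hsub2 (hEfin.diff)
      push_cast
      linarith
  have hlamX : lam M X ≤ 2 := by
    have := hsep.2.1; norm_num at this; exact this
  have hlamX' : rk M X + rk M Y - rk M M.E ≤ 2 := by
    simp only [lam] at hlamX; rwa [hcomplX] at hlamX
  -- conclude rk {x,y} ≤ 1
  have hxyle : rk M {x, y} ≤ 1 := by
    rw [hUeq] at hsub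
    have : rk M T = rk M Y := hT
    linarith [hcoloop, h1, hpair, hsub, hlamX']
  -- {x,y} is a 2-separation
  apply hM 2 (by norm_num) {x, y}
  have hxyE : {x, y} ⊆ M.E := by
    rintro a (rfl | rfl); exacts [hXE hx.1, hXE hy.1]
  refine ⟨hxyE, ?_, ?_, ?_⟩
  · simp only [lam]
    have h5 : rk M (M.E \ {x, y}) ≤ rk M M.E := rk_mono diff_subset
    push_cast
    linarith
  · rw [Set.ncard_pair hxy]
  · have h3 : (3 : ℤ) ≤ Y.ncard := by
      have := hsep.2.2.2; rwa [hcomplX] at this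
    have h4 : (Y.ncard : ℤ) ≤ ((M.E \ {x, y}).ncard : ℤ) := by
      have hsub2 : Y ⊆ M.E \ {x, y} := by
        intro a ha
        refine ⟨hYE ha, ?_⟩
        rintro (rfl | rfl)
        · exact (disjoint_left.1 hdisj hx.1) ha
        · exact (disjoint_left.1 hdisj hy.1) ha
      exact_mod_cast Set.ncard_le_ncard hsub2 (hEfin.diff)
    push_cast
    linarith

end Key

end RankLemmas

/-- Let `(X,Y)` be a 3-separation of a 3-connected matroid `M`. If
`X ∩ cl(Y)` and `X ∩ cl*(Y)` are both nonempty, then both have exactly one element. -/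
theorem stmt8 (M : Matroid α) [M.Finite] (hM : ThreeConnectedP M)
    (X Y : Set α) (hdisj : Disjoint X Y) (hU : X ∪ Y = M.E)
    (hsep : IsKSepP M 3 X)
    (h1 : (X ∩ M.closure Y).Nonempty) (h2 : (X ∩ M✶.closure Y).Nonempty) :
    (X ∩ M.closure Y).ncard = 1 ∧ (X ∩ M✶.closure Y).ncard = 1 := by
  obtain ⟨a, ha⟩ := h1
  obtain ⟨b, hb⟩ := h2
  have hU' : X ∪ Y = M✶.E := by rwa [dual_ground]
  have hsep' : IsKSepP M✶ 3 X := isKSepP_dual_iff.2 hsep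
  have hM' : ThreeConnectedP M✶ := threeConnectedP_dual hM
  have ha' : a ∈ X ∩ M✶✶.closure Y := by rwa [dual_dual]
  constructor
  · rw [Set.ncard_eq_one]
    refine ⟨a, Set.eq_singleton_iff_unique_mem.2 ⟨ha, fun c hc => ?_⟩⟩
    by_contra hca
    exact key hdisj hU hM hsep hc ha hca hb
  · rw [Set.ncard_eq_one]
    refine ⟨b, Set.eq_singleton_iff_unique_mem.2 ⟨hb, fun c hc => ?_⟩⟩
    by_contra hcb
    exact key (M := M✶) hdisj hU' hM' hsep' hc hb hcb ha'


end PaperFormal
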